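/- arXiv:2512.01794 — 2 statements merged into one kernel-verified Lean document; each statement's English description precedes it below -/
import Mathlib

section
/- Let D = {x ∈ ℝ^M : a < |x| < b} with 0 < a < b < ∞, μ ≥ 0, and 2 < q < 2 + 4/M. Suppose F : ℝ → ℝ satisfies: for every ε > 0 there is C_ε > 0 with F(s) ≤ (ε/2)s² + (C_ε/q)|s|^q for all s. Then for any c > 0, the functional E(v) = (1/2)∫_D |∇v|² dx - ∫_D |x|^μ F(v) dx is coercive on S_c = {v ∈ H¹₀(D) : ∫_D |x|^μ v² dx = c²}; in particular, inf_{S_c} E > -∞. -/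
open MeasureTheory Filter Set

/-- The constrained energy functional `E(v) = (1/2)∫_D |∇v|² - ∫_D |x|^μ F(v)`. -/
noncomputable def energy {M : ℕ} (D : Set (EuclideanSpace ℝ (Fin M))) (μ : ℝ) (F : ℝ → ℝ)
    (v : EuclideanSpace ℝ (Fin M) → ℝ) : ℝ :=
  (1/2) * (∫ x in D, ‖gradient v x‖ ^ 2) - ∫ x in D, ‖x‖ ^ μ * F (v x)

/-- Membership in (a dense subclass of) `H¹₀(D)`: `C¹` functions compactly supported in `D`. -/
def H10mem {M : ℕ} (D : Set (EuclideanSpace ℝ (Fin M))) (v : EuclideanSpace ℝ (Fin M) → ℝ) :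
    Prop :=
  ContDiff ℝ 1 v ∧ HasCompactSupport v ∧ tsupport v ⊆ D

open Module
open scoped NNReal

/-! On the annulus the weight `|x|^μ` lies between `a^μ` and `b^μ`, so the mass constraint gives
`‖v‖₂² ≤ c²/a^μ`, and the growth bound on `F` (with `ε = 1`) gives
`E(v) ≥ ½‖∇v‖₂² - c²/2 - (C/q) b^μ ‖v‖_q^q`. Interpolating `L^q` between `L²` and `L^{2M/(M-2)}`
and applying the Sobolev inequality to the second factor yields the Gagliardo–Nirenberg bound
`‖v‖_q^q ≤ K ‖∇v‖₂^{M(q-2)/2}`. Since `q < 2 + 4/M` the exponent `M(q-2)/2` is below `2`, so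
Young's inequality absorbs this term: `E(v) ≥ ¼‖∇v‖₂² - B` on `S_c`. -/

theorem exists_mul_rpow_le_mul_add (K : ℝ) {β ε : ℝ} (hβ0 : 0 ≤ β) (hβ1 : β < 1) (hε : 0 < ε) :
    ∃ B, ∀ G : ℝ, 0 ≤ G → K * G ^ β ≤ ε * G + B := by
  rcases le_or_gt K 0 with hK | hK
  · exact ⟨0, fun G hG => by nlinarith [Real.rpow_nonneg hG β]⟩
  set T := (K / ε) ^ (1 - β)⁻¹
  have hT : 0 < T := by positivity
  refine ⟨K * T ^ β, fun G hG => ?_⟩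
  rcases le_total G T with hGT | hTG
  · have : K * G ^ β ≤ K * T ^ β := by gcongr
    nlinarith
  · have hG : 0 < G := hT.trans_le hTG
    have hKG : K ≤ ε * G ^ (1 - β) := by
      calc K = ε * T ^ (1 - β) := by
            rw [← Real.rpow_mul (by positivity), inv_mul_cancel₀ (sub_ne_zero.2 hβ1.ne'),
              Real.rpow_one, mul_div_cancel₀ K hε.ne']
        _ ≤ ε * G ^ (1 - β) := by gcongr
    calc K * G ^ β ≤ ε * G ^ (1 - β) * G ^ β := by gcongr
      _ = ε * G := by rw [mul_assoc, ← Real.rpow_add hG, sub_add_cancel, Real.rpow_one]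
      _ ≤ ε * G + K * T ^ β := le_add_of_nonneg_right (by positivity)

theorem integral_rpow_abs_le_interpolation {α : Type*} [MeasurableSpace α] {ν : Measure α}
    {f : α → ℝ} {r s θ : ℝ} (hr : 0 < r) (hs : 0 < s) (hθ0 : 0 < θ) (hθ1 : θ < 1)
    (hf : AEStronglyMeasurable f ν) (hfr : Integrable (fun x => |f x| ^ r) ν)
    (hfs : Integrable (fun x => |f x| ^ s) ν) :
    ∫ x, |f x| ^ ((1 - θ) * r + θ * s) ∂ν ≤
      (∫ x, |f x| ^ r ∂ν) ^ (1 - θ) * (∫ x, |f x| ^ s ∂ν) ^ θ := by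
  have hconj : (1 - θ)⁻¹.HolderConjugate θ⁻¹ :=
    Real.holderConjugate_iff.2 ⟨(one_lt_inv₀ (by linarith)).2 (by linarith), by simp⟩
  have hpow : ∀ {e t : ℝ}, 0 < e → 0 < t → ∀ x, (|f x| ^ (e * t)) ^ e⁻¹ = |f x| ^ t := by
    intro e t he _ x
    rw [← Real.rpow_mul (abs_nonneg _), mul_comm e, mul_assoc, mul_inv_cancel₀ he.ne', mul_one]
  have hmem : ∀ {e t : ℝ}, 0 < e → 0 < t → Integrable (fun x => |f x| ^ t) ν →
      MemLp (fun x => |f x| ^ (e * t)) (ENNReal.ofReal e⁻¹) ν := by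
    intro e t he ht hft
    have hm : AEStronglyMeasurable (fun x => |f x| ^ (e * t)) ν :=
      (hf.norm.aemeasurable.pow_const _).aestronglyMeasurable
    refine (integrable_norm_rpow_iff hm (by simpa using he) ENNReal.ofReal_ne_top).1 ?_
    simpa [ENNReal.toReal_ofReal (inv_nonneg.2 he.le), Real.abs_rpow_of_nonneg (abs_nonneg _),
      hpow he ht] using hft
  have := integral_mul_le_Lp_mul_Lq_of_nonneg hconj
    (ae_of_all _ fun x => Real.rpow_nonneg (abs_nonneg (f x)) ((1 - θ) * r))
    (ae_of_all _ fun x => Real.rpow_nonneg (abs_nonneg (f x)) (θ * s))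
    (hmem (by linarith) hr hfr) (hmem hθ0 hs hfs)
  have hsplit : ∀ x, |f x| ^ ((1 - θ) * r + θ * s) = |f x| ^ ((1 - θ) * r) * |f x| ^ (θ * s) :=
    fun x => Real.rpow_add' (abs_nonneg _) (by nlinarith)
  simpa only [hsplit, hpow (by linarith : 0 < 1 - θ) hr, hpow hθ0 hs, one_div, inv_inv] using this

theorem integrable_comp_of_hasCompactSupport {X : Type*} [TopologicalSpace X] [MeasurableSpace X]
    [OpensMeasurableSpace X] {ν : Measure X} [IsFiniteMeasureOnCompacts ν] {v : X → ℝ}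
    (hv : Continuous v) (h2v : HasCompactSupport v) {g : ℝ → ℝ} (hg : Continuous g)
    (hg0 : g 0 = 0) : Integrable (fun x => g (v x)) ν :=
  (hg.comp hv).integrable_of_hasCompactSupport (h2v.comp_left hg0)

section Sobolev

variable {E : Type*} [NormedAddCommGroup E] [NormedSpace ℝ E] [MeasurableSpace E] [BorelSpace E]
  [FiniteDimensional ℝ E] (μ : Measure E) [μ.IsAddHaarMeasure]

theorem integral_rpow_abs_le_sobolev {u : E → ℝ} (hu : ContDiff ℝ 1 u)
    (h2u : HasCompactSupport u) {p p' : ℝ≥0} (hp : 1 ≤ p) (hp' : 0 < p')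
    (hn : 0 < finrank ℝ E) (hpp' : (p' : ℝ)⁻¹ = p⁻¹ - (finrank ℝ E : ℝ)⁻¹) :
    (∫ x, |u x| ^ (p' : ℝ) ∂μ) ^ (p' : ℝ)⁻¹ ≤
      eLpNormLESNormFDerivOfEqInnerConst μ p * (∫ x, ‖fderiv ℝ u x‖ ^ (p : ℝ) ∂μ) ^ (p : ℝ)⁻¹ := by
  have h := eLpNorm_le_eLpNorm_fderiv_of_eq_inner μ hu h2u hp hn hpp'
  rw [(hu.continuous.memLp_of_hasCompactSupport h2u).eLpNorm_eq_integral_rpow_norm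
      (by simpa using hp'.ne') ENNReal.coe_ne_top,
    ((hu.continuous_fderiv one_ne_zero).memLp_of_hasCompactSupport
      (h2u.fderiv ℝ)).eLpNorm_eq_integral_rpow_norm
      (by simpa using (zero_lt_one.trans_le hp).ne') ENNReal.coe_ne_top] at h
  have := ENNReal.toReal_mono (by finiteness) h
  rwa [ENNReal.toReal_mul, ENNReal.toReal_ofReal (by positivity),
    ENNReal.toReal_ofReal (by positivity)] at this

theorem integral_rpow_abs_le_sobolev_two (hn : 2 < finrank ℝ E) {u : E → ℝ}
    (hu : ContDiff ℝ 1 u) (h2u : HasCompactSupport u) :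
    (∫ x, |u x| ^ (2 * finrank ℝ E / (finrank ℝ E - 2) : ℝ) ∂μ) ^
        (2 * finrank ℝ E / (finrank ℝ E - 2) : ℝ)⁻¹ ≤
      eLpNormLESNormFDerivOfEqInnerConst μ 2 * (∫ x, ‖fderiv ℝ u x‖ ^ 2 ∂μ) ^ (2 : ℝ)⁻¹ := by
  have hn2 : (2 : ℝ) < finrank ℝ E := by exact_mod_cast hn
  have hP : (0 : ℝ) < 2 * finrank ℝ E / (finrank ℝ E - 2) := div_pos (by positivity) (by linarith)
  have h := integral_rpow_abs_le_sobolev μ hu h2u (p := 2)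
    (p' := (2 * finrank ℝ E / (finrank ℝ E - 2) : ℝ).toNNReal) (by norm_num) (by simpa using hP)
    (by omega) (by
      rw [Real.coe_toNNReal _ hP.le]
      push_cast
      field_simp)
  simpa only [Real.coe_toNNReal _ hP.le, NNReal.coe_ofNat, Real.rpow_two] using h

theorem integral_rpow_abs_le_gagliardoNirenberg (hn : 2 < finrank ℝ E) {u : E → ℝ}
    (hu : ContDiff ℝ 1 u) (h2u : HasCompactSupport u) {q : ℝ} (hq2 : 2 < q)
    (hq : q < 2 * finrank ℝ E / (finrank ℝ E - 2)) :
    ∫ x, |u x| ^ q ∂μ ≤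
      (eLpNormLESNormFDerivOfEqInnerConst μ 2 : ℝ) ^ (finrank ℝ E * (q - 2) / 2) *
        (∫ x, u x ^ 2 ∂μ) ^ (1 - (finrank ℝ E - 2) * (q - 2) / 4) *
        (∫ x, ‖fderiv ℝ u x‖ ^ 2 ∂μ) ^ (finrank ℝ E * (q - 2) / 4) := by
  have hsob := integral_rpow_abs_le_sobolev_two μ hn hu h2u
  set n : ℝ := (finrank ℝ E : ℝ) with hn_def
  set C : ℝ := (eLpNormLESNormFDerivOfEqInnerConst μ 2 : ℝ)
  set G := ∫ x, ‖fderiv ℝ u x‖ ^ 2 ∂μ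
  set P := 2 * n / (n - 2) with hP_def
  set θ := (n - 2) * (q - 2) / 4 with hθ_def
  have hn2 : 2 < n := by rw [hn_def]; exact_mod_cast hn
  have hP : 0 < P := by positivity
  have hθ0 : 0 < θ := by positivity
  have hθ1 : θ < 1 := by
    rw [hP_def, lt_div_iff₀ (by linarith)] at hq
    rw [hθ_def, div_lt_one four_pos]
    linarith
  have hqθ : q = (1 - θ) * 2 + θ * P := by
    rw [hθ_def, hP_def]
    field_simp [show n - 2 ≠ 0 by linarith]
    ring
  have hPθ : P * θ = n * (q - 2) / 2 := by
    rw [hP_def, hθ_def]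
    field_simp [show n - 2 ≠ 0 by linarith]
    ring
  have hint : ∀ {t : ℝ}, 0 < t → Integrable (fun x => |u x| ^ t) μ := fun ht =>
    integrable_comp_of_hasCompactSupport hu.continuous h2u
      (continuous_abs.rpow_const fun _ => Or.inr ht.le) (by simp [ht.ne'])
  have hsobθ : (∫ x, |u x| ^ P ∂μ) ^ θ ≤ C ^ (n * (q - 2) / 2) * G ^ (n * (q - 2) / 4) :=
    calc (∫ x, |u x| ^ P ∂μ) ^ θ = ((∫ x, |u x| ^ P ∂μ) ^ P⁻¹) ^ (P * θ) := by
          rw [← Real.rpow_mul (by positivity), inv_mul_cancel_left₀ hP.ne']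
      _ ≤ (C * G ^ (2 : ℝ)⁻¹) ^ (P * θ) := by gcongr
      _ = C ^ (n * (q - 2) / 2) * G ^ (n * (q - 2) / 4) := by
          rw [Real.mul_rpow (by positivity) (by positivity), ← Real.rpow_mul (by positivity), hPθ]
          ring_nf
  calc ∫ x, |u x| ^ q ∂μ = ∫ x, |u x| ^ ((1 - θ) * 2 + θ * P) ∂μ := by rw [← hqθ]
    _ ≤ (∫ x, u x ^ 2 ∂μ) ^ (1 - θ) * (∫ x, |u x| ^ P ∂μ) ^ θ := by
      simpa only [Real.rpow_two, sq_abs] using integral_rpow_abs_le_interpolation two_pos hP hθ0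
        hθ1 hu.continuous.aestronglyMeasurable (hint two_pos) (hint hP)
    _ ≤ (∫ x, u x ^ 2 ∂μ) ^ (1 - θ) * (C ^ (n * (q - 2) / 2) * G ^ (n * (q - 2) / 4)) := by
      gcongr
    _ = _ := by ring

end Sobolev

section Weighted

variable {X : Type*} [NormedAddCommGroup X] [MeasurableSpace X] {ν : Measure X} {D : Set X}
  {v : X → ℝ} {a b μ : ℝ}

theorem setIntegral_eq_integral_of_tsupport_subset (hvD : tsupport v ⊆ D) {g : X → ℝ → ℝ}
    (hg : ∀ x, g x 0 = 0) : ∫ x in D, g x (v x) ∂ν = ∫ x, g x (v x) ∂ν :=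
  setIntegral_eq_integral_of_forall_compl_eq_zero fun x hx => by
    rw [image_eq_zero_of_notMem_tsupport fun h => hx (hvD h), hg]

variable [BorelSpace X] [IsFiniteMeasureOnCompacts ν]

theorem integrable_rpow_norm_mul_comp (hμ : 0 ≤ μ) (hv : Continuous v) (h2v : HasCompactSupport v)
    {g : ℝ → ℝ} (hg : Continuous g) (hg0 : g 0 = 0) :
    Integrable (fun x => ‖x‖ ^ μ * g (v x)) ν :=
  ((continuous_norm.rpow_const fun _ => Or.inr hμ).mul (hg.comp hv)).integrable_of_hasCompactSupport
    (h2v.comp_left hg0).mul_left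

theorem rpow_mul_integral_sq_le_setIntegral (ha : 0 ≤ a) (hμ : 0 ≤ μ) (hDa : ∀ x ∈ D, a ≤ ‖x‖)
    (hv : Continuous v) (h2v : HasCompactSupport v) (hvD : tsupport v ⊆ D) :
    a ^ μ * ∫ x, v x ^ 2 ∂ν ≤ ∫ x in D, ‖x‖ ^ μ * v x ^ 2 ∂ν := by
  rw [setIntegral_eq_integral_of_tsupport_subset hvD (g := fun x s => ‖x‖ ^ μ * s ^ 2) (by simp),
    ← integral_const_mul]
  refine integral_mono
    ((integrable_comp_of_hasCompactSupport hv h2v (continuous_pow 2) (by simp)).const_mul _)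
    (integrable_rpow_norm_mul_comp hμ hv h2v (continuous_pow 2) (by simp)) fun x => ?_
  rcases eq_or_ne (v x) 0 with hx | hx
  · simp [hx]
  · gcongr
    exact hDa x (hvD (subset_tsupport _ hx))

theorem setIntegral_rpow_norm_mul_rpow_abs_le (hμ : 0 ≤ μ) (hDb : ∀ x ∈ D, ‖x‖ ≤ b) {q : ℝ}
    (hq : 0 < q) (hv : Continuous v) (h2v : HasCompactSupport v) (hvD : tsupport v ⊆ D) :
    ∫ x in D, ‖x‖ ^ μ * |v x| ^ q ∂ν ≤ b ^ μ * ∫ x, |v x| ^ q ∂ν := by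
  have hg : Continuous fun s : ℝ => |s| ^ q := continuous_abs.rpow_const fun _ => Or.inr hq.le
  have hg0 : |(0 : ℝ)| ^ q = 0 := by simp [hq.ne']
  rw [setIntegral_eq_integral_of_tsupport_subset hvD (g := fun x s => ‖x‖ ^ μ * |s| ^ q)
      (by simp [hq.ne']), ← integral_const_mul]
  refine integral_mono (integrable_rpow_norm_mul_comp hμ hv h2v hg hg0)
    ((integrable_comp_of_hasCompactSupport hv h2v hg hg0).const_mul _) fun x => ?_
  rcases eq_or_ne (v x) 0 with hx | hx
  · simp [hx, hq.ne']
  · gcongr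
    exact hDb x (hvD (subset_tsupport _ hx))

theorem setIntegral_rpow_norm_mul_comp_le [ProperSpace X] (hμ : 0 ≤ μ) (hDb : ∀ x ∈ D, ‖x‖ ≤ b)
    {F : ℝ → ℝ} (hFc : Continuous F) {ε C q : ℝ} (hq : 0 < q)
    (hF : ∀ s, F s ≤ ε / 2 * s ^ 2 + C / q * |s| ^ q)
    (hv : Continuous v) (h2v : HasCompactSupport v) :
    ∫ x in D, ‖x‖ ^ μ * F (v x) ∂ν ≤
      ε / 2 * ∫ x in D, ‖x‖ ^ μ * v x ^ 2 ∂ν + C / q * ∫ x in D, ‖x‖ ^ μ * |v x| ^ q ∂ν := by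
  have hw : Continuous fun x : X => ‖x‖ ^ μ := continuous_norm.rpow_const fun _ => Or.inr hμ
  have hFv : IntegrableOn (fun x => ‖x‖ ^ μ * F (v x)) D ν :=
    ((hw.mul (hFc.comp hv)).continuousOn.integrableOn_compact (isCompact_closedBall 0 b)).mono_set
      fun x hx => mem_closedBall_zero_iff.2 (hDb x hx)
  have hv2 : IntegrableOn (fun x => ‖x‖ ^ μ * v x ^ 2) D ν :=
    (integrable_rpow_norm_mul_comp hμ hv h2v (continuous_pow 2) (by simp)).integrableOn
  have hvq : IntegrableOn (fun x => ‖x‖ ^ μ * |v x| ^ q) D ν :=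
    (integrable_rpow_norm_mul_comp hμ hv h2v (continuous_abs.rpow_const fun _ => Or.inr hq.le)
      (by simp [hq.ne'])).integrableOn
  rw [← integral_const_mul, ← integral_const_mul,
    ← integral_add (hv2.const_mul _) (hvq.const_mul _)]
  refine setIntegral_mono hFv ((hv2.const_mul _).add (hvq.const_mul _)) fun x => ?_
  calc ‖x‖ ^ μ * F (v x) ≤ ‖x‖ ^ μ * (ε / 2 * v x ^ 2 + C / q * |v x| ^ q) := by
        gcongr
        exact hF _
    _ = _ := by ring

end Weighted

theorem setIntegral_norm_gradient_sq_eq {E : Type*} [NormedAddCommGroup E] [InnerProductSpace ℝ E]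
    [CompleteSpace E] [MeasurableSpace E] {ν : Measure E} {D : Set E} {v : E → ℝ}
    (hvD : tsupport v ⊆ D) : ∫ x in D, ‖gradient v x‖ ^ 2 ∂ν = ∫ x, ‖fderiv ℝ v x‖ ^ 2 ∂ν := by
  have hnorm : ∀ x, ‖gradient v x‖ = ‖fderiv ℝ v x‖ := fun x => by
    rw [← toDual_gradient, LinearIsometryEquiv.norm_map]
  simp_rw [hnorm]
  exact setIntegral_eq_integral_of_forall_compl_eq_zero fun x hx => by
    simp [fderiv_of_notMem_tsupport ℝ fun h => hx (hvD h)]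

theorem exists_le_energy {M : ℕ} (hM : 2 < M) {D : Set (EuclideanSpace ℝ (Fin M))} {a b μ q : ℝ}
    (ha : 0 < a) (hb : 0 ≤ b) (hDa : ∀ x ∈ D, a ≤ ‖x‖) (hDb : ∀ x ∈ D, ‖x‖ ≤ b) (hμ : 0 ≤ μ)
    (hq2 : 2 < q) (hq : q < 2 * M / (M - 2)) {F : ℝ → ℝ} (hFc : Continuous F) {ε C : ℝ}
    (hC : 0 ≤ C) (hF : ∀ s, F s ≤ ε / 2 * s ^ 2 + C / q * |s| ^ q) (c : ℝ) :
    ∃ K, ∀ v, H10mem D v → ∫ x in D, ‖x‖ ^ μ * v x ^ 2 = c ^ 2 →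
      1 / 2 * (∫ x in D, ‖gradient v x‖ ^ 2) - ε / 2 * c ^ 2 -
        K * (∫ x in D, ‖gradient v x‖ ^ 2) ^ (M * (q - 2) / 4) ≤ energy D μ F v := by
  set Cs : ℝ :=
    (eLpNormLESNormFDerivOfEqInnerConst (volume : Measure (EuclideanSpace ℝ (Fin M))) 2 : ℝ)
  set θ := ((M : ℝ) - 2) * (q - 2) / 4
  set β := (M : ℝ) * (q - 2) / 4
  have hM2 : (2 : ℝ) < M := by exact_mod_cast hM
  have hθ1 : 0 ≤ 1 - θ := by
    have := (lt_div_iff₀ (by linarith)).1 hq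
    simp only [θ]
    linarith
  have hq0 : 0 < q := by linarith
  refine ⟨C / q * b ^ μ * Cs ^ (M * (q - 2) / 2) * (c ^ 2 / a ^ μ) ^ (1 - θ),
    fun v ⟨hv, h2v, hvD⟩ hmass => ?_⟩
  set G := ∫ x in D, ‖gradient v x‖ ^ 2
  have hGN : ∫ x, |v x| ^ q ≤ Cs ^ (M * (q - 2) / 2) * (∫ x, v x ^ 2) ^ (1 - θ) * G ^ β := by
    have := integral_rpow_abs_le_gagliardoNirenberg volume (by simpa) hv h2v hq2 (by simpa)
    rwa [finrank_euclideanSpace_fin, ← setIntegral_norm_gradient_sq_eq hvD] at this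
  have hL2 : ∫ x, v x ^ 2 ≤ c ^ 2 / a ^ μ := by
    rw [le_div_iff₀' (by positivity), ← hmass]
    exact rpow_mul_integral_sq_le_setIntegral ha.le hμ hDa hv.continuous h2v hvD
  have hpot : ∫ x in D, ‖x‖ ^ μ * F (v x) ≤
      ε / 2 * c ^ 2 + C / q * b ^ μ * Cs ^ (M * (q - 2) / 2) * (c ^ 2 / a ^ μ) ^ (1 - θ) * G ^ β :=
    calc ∫ x in D, ‖x‖ ^ μ * F (v x)
        ≤ ε / 2 * c ^ 2 + C / q * ∫ x in D, ‖x‖ ^ μ * |v x| ^ q := by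
          rw [← hmass]
          exact setIntegral_rpow_norm_mul_comp_le hμ hDb hFc hq0 hF hv.continuous h2v
      _ ≤ ε / 2 * c ^ 2 + C / q * (b ^ μ * ∫ x, |v x| ^ q) := by
          gcongr
          exact setIntegral_rpow_norm_mul_rpow_abs_le hμ hDb hq0 hv.continuous h2v hvD
      _ ≤ ε / 2 * c ^ 2 + C / q * (b ^ μ *
            (Cs ^ (M * (q - 2) / 2) * (c ^ 2 / a ^ μ) ^ (1 - θ) * G ^ β)) := by
          gcongr
          exact hGN.trans (by gcongr)
      _ = _ := by ring
  unfold energy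
  linarith

theorem stmt_2_general {M : ℕ} (hM : 3 ≤ M) (a b : ℝ) (ha : 0 < a) (hab : a < b)
    (D : Set (EuclideanSpace ℝ (Fin M))) (hD : D = {x | a < ‖x‖ ∧ ‖x‖ < b})
    (μ : ℝ) (hμ : 0 ≤ μ) (q : ℝ) (hq2 : 2 < q) (hqM : q < 2 + 4 / (M : ℝ))
    (F : ℝ → ℝ) (hFc : Continuous F)
    (hF : ∀ ε : ℝ, 0 < ε → ∃ Cε : ℝ, 0 < Cε ∧ ∀ s : ℝ, F s ≤ ε / 2 * s ^ 2 + Cε / q * |s| ^ q)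
    (c : ℝ) :
    BddBelow (energy D μ F ''
        {v | H10mem D v ∧ (∫ x in D, ‖x‖ ^ μ * (v x) ^ 2) = c ^ 2}) ∧
    ∀ v : ℕ → EuclideanSpace ℝ (Fin M) → ℝ,
      (∀ n, H10mem D (v n) ∧ (∫ x in D, ‖x‖ ^ μ * (v n x) ^ 2) = c ^ 2) →
      Tendsto (fun n => ∫ x in D, ‖gradient (v n) x‖ ^ 2) atTop atTop →
      Tendsto (fun n => energy D μ F (v n)) atTop atTop := by
  have hM3 : (3 : ℝ) ≤ M := by exact_mod_cast hM
  have hqβ : (M : ℝ) * (q - 2) < 4 := by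
    have := (lt_div_iff₀' (by positivity)).1 (show q - 2 < 4 / M by linarith)
    linarith
  have hq : q < 2 * M / (M - 2) := by
    rw [lt_div_iff₀ (by linarith)]
    nlinarith
  obtain ⟨C, hC, hFC⟩ := hF 1 one_pos
  have hDab : ∀ x ∈ D, a < ‖x‖ ∧ ‖x‖ < b := fun x hx => by rwa [hD] at hx
  obtain ⟨K, hK⟩ := exists_le_energy hM ha (ha.trans hab).le (fun x hx => (hDab x hx).1.le)
    (fun x hx => (hDab x hx).2.le) hμ hq2 hq hFc hC.le hFC c
  obtain ⟨B, hB⟩ := exists_mul_rpow_le_mul_add K (β := M * (q - 2) / 4) (by nlinarith)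
    (by linarith) (ε := 1 / 4) (by norm_num)
  have hG0 : ∀ v : EuclideanSpace ℝ (Fin M) → ℝ, 0 ≤ ∫ x in D, ‖gradient v x‖ ^ 2 := fun v =>
    integral_nonneg (μ := volume.restrict D) fun x => sq_nonneg ‖gradient v x‖
  have hcoercive : ∀ v, H10mem D v → ∫ x in D, ‖x‖ ^ μ * v x ^ 2 = c ^ 2 →
      (∫ x in D, ‖gradient v x‖ ^ 2) / 4 - (c ^ 2 / 2 + B) ≤ energy D μ F v := by
    intro v hv hmass
    linarith [hK v hv hmass, hB _ (hG0 v)]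
  refine ⟨⟨-(c ^ 2 / 2 + B), ?_⟩, fun v hv hG => ?_⟩
  · rintro _ ⟨v, ⟨hv, hmass⟩, rfl⟩
    linarith [hcoercive v hv hmass, hG0 v]
  · refine tendsto_atTop_mono (fun n => hcoercive (v n) (hv n).1 (hv n).2) ?_
    exact tendsto_atTop_add_const_right _ _ (hG.atTop_div_const four_pos)

/-- in the mass-subcritical regime `2 < q < 2 + 4/M`, for every `c > 0` the
functional `E` is coercive on `S_c = {v ∈ H¹₀(D) : ∫_D |x|^μ v² = c²}` (any sequence in `S_c`
whose gradient `L²`-norms blow up has energies tending to `+∞`), and `inf_{S_c} E > -∞`. -/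
theorem stmt_2 {M : ℕ} (hM : 3 ≤ M) (a b : ℝ) (ha : 0 < a) (hab : a < b)
    (D : Set (EuclideanSpace ℝ (Fin M))) (hD : D = {x | a < ‖x‖ ∧ ‖x‖ < b})
    (μ : ℝ) (hμ : 0 ≤ μ) (q : ℝ) (hq2 : 2 < q) (hqM : q < 2 + 4 / (M : ℝ))
    (F : ℝ → ℝ) (hFc : Continuous F)
    (hF : ∀ ε : ℝ, 0 < ε → ∃ Cε : ℝ, 0 < Cε ∧ ∀ s : ℝ, F s ≤ ε / 2 * s ^ 2 + Cε / q * |s| ^ q)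
    (c : ℝ) (hc : 0 < c) :
    BddBelow (energy D μ F ''
        {v | H10mem D v ∧ (∫ x in D, ‖x‖ ^ μ * (v x) ^ 2) = c ^ 2}) ∧
    ∀ v : ℕ → EuclideanSpace ℝ (Fin M) → ℝ,
      (∀ n, H10mem D (v n) ∧ (∫ x in D, ‖x‖ ^ μ * (v n x) ^ 2) = c ^ 2) →
      Tendsto (fun n => ∫ x in D, ‖gradient (v n) x‖ ^ 2) atTop atTop →
      Tendsto (fun n => energy D μ F (v n)) atTop atTop :=
  stmt_2_general hM a b ha hab D hD μ hμ q hq2 hqM F hFc hF c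
end

section
/- Let D = {x ∈ ℝ^M : a < |x| < b}, μ ≥ 0, and q = 2 + 4/M (so γ_q q = 2, where γ_q = M(q-2)/(2q)). Under the same hypothesis on F as above, there exists c₁ > 0 such that for all 0 < c < c₁ the functional E(v) = (1/2)∫_D |∇v|² - ∫_D |x|^μ F(v) is coercive and bounded below on S_c = {v ∈ H¹₀(D) : ∫_D |x|^μ v² = c²}. -/
/-!
For `q = 2 + 4/M`, Hölder's inequality with exponents `M/2` and `M/(M-2)` interpolates
`∫ |v|^q` between `∫ v²` and the Sobolev quantity `∫ |v|^(2M/(M-2))`, and the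
Gagliardo–Nirenberg–Sobolev inequality bounds the latter by `∫ |∇v|²`. The result,
`∫ |v|^q ≤ S (∫ v²)^(2/M) ∫ |∇v|²`, is linear in `∫ |∇v|²`: this is what makes `q` mass-critical.
On the annulus the weight `|x|^μ` lies between `a^μ` and `b^μ`, so the constraint gives
`∫ v² ≤ c²/a^μ`, and the growth bound on `F` (with `ε = 1`) yields
`E(v) ≥ (1/2 - δ(c)) ∫ |∇v|² - K(c)` with `δ(c) = O(c^(4/M)) → 0`. Once `δ(c) < 1/4`, `E` is
bounded below on `S_c` and tends to `∞` with `∫ |∇v|²`.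
-/

open MeasureTheory Filter Set

open Topology Module
open scoped ENNReal NNReal

theorem lintegral_rpow_two_add_four_div_le {α : Type*} [MeasurableSpace α] (ν : Measure α)
    {f : α → ℝ≥0∞} (hf : AEMeasurable f ν) {n : ℝ} (hn : 2 < n) :
    ∫⁻ x, f x ^ (2 + 4 / n) ∂ν ≤
      (∫⁻ x, f x ^ (2 : ℝ) ∂ν) ^ (2 / n) * (∫⁻ x, f x ^ (2 * n / (n - 2)) ∂ν) ^ ((n - 2) / n) := by
  have hn0 : 0 < n - 2 := by linarith
  have hconj : (n / 2).HolderConjugate (n / (n - 2)) := by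
    rw [Real.holderConjugate_iff]
    refine ⟨by linarith, ?_⟩
    field_simp
    ring
  have h := ENNReal.lintegral_mul_le_Lp_mul_Lq ν hconj (f := fun x => f x ^ (4 / n))
    (g := fun x => f x ^ (2 : ℝ)) (hf.pow_const _) (hf.pow_const _)
  have hmul : ∀ x, f x ^ (4 / n) * f x ^ (2 : ℝ) = f x ^ (2 + 4 / n) := fun x => by
    rw [← ENNReal.rpow_add_of_nonneg _ _ (by positivity) zero_le_two, add_comm]
  have hpow₁ : ∀ x, (f x ^ (4 / n)) ^ (n / 2) = f x ^ (2 : ℝ) := fun x => by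
    rw [← ENNReal.rpow_mul]; congr 1; field_simp; norm_num
  have hpow₂ : ∀ x, (f x ^ (2 : ℝ)) ^ (n / (n - 2)) = f x ^ (2 * n / (n - 2)) := fun x => by
    rw [← ENNReal.rpow_mul]; congr 1; ring
  simp only [Pi.mul_apply, hmul, hpow₁, hpow₂] at h
  convert h using 2 <;> field_simp

theorem ofReal_integral_norm_rpow_eq_lintegral {X G : Type*} [TopologicalSpace X]
    [MeasurableSpace X] [OpensMeasurableSpace X] (ν : Measure X) [IsFiniteMeasureOnCompacts ν]
    [NormedAddCommGroup G] {w : X → G} (hw : Continuous w)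
    (h2w : HasCompactSupport w) {r : ℝ} (hr : 0 < r) :
    ENNReal.ofReal (∫ x, ‖w x‖ ^ r ∂ν) = ∫⁻ x, ‖w x‖ₑ ^ r ∂ν := by
  have hint : Integrable (fun x => ‖w x‖ ^ r) ν :=
    (hw.norm.rpow_const fun _ => Or.inr hr.le).integrable_of_hasCompactSupport
      (h2w.norm.comp_left (g := fun s : ℝ => s ^ r) (Real.zero_rpow hr.ne'))
  rw [ofReal_integral_eq_lintegral_ofReal hint (ae_of_all _ fun x => by positivity)]
  simp_rw [← ENNReal.ofReal_rpow_of_nonneg (norm_nonneg _) hr.le, ofReal_norm]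

section GagliardoNirenberg

variable {E F : Type*} [NormedAddCommGroup E] [NormedSpace ℝ E] [MeasurableSpace E] [BorelSpace E]
  [FiniteDimensional ℝ E] (ν : Measure E) [ν.IsAddHaarMeasure]
  [NormedAddCommGroup F] [NormedSpace ℝ F] [FiniteDimensional ℝ F]

theorem lintegral_sobolev_rpow_le {u : E → F} (hu : ContDiff ℝ 1 u) (h2u : HasCompactSupport u)
    (hn : 2 < finrank ℝ E) :
    (∫⁻ x, ‖u x‖ₑ ^ (2 * (finrank ℝ E : ℝ) / (finrank ℝ E - 2)) ∂ν) ^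
        (((finrank ℝ E : ℝ) - 2) / finrank ℝ E) ≤
      (SNormLESNormFDerivOfEqConst F ν 2 : ℝ≥0∞) ^ 2 * ∫⁻ x, ‖fderiv ℝ u x‖ₑ ^ (2 : ℝ) ∂ν := by
  set n : ℝ := (finrank ℝ E : ℝ)
  have hn' : (2 : ℝ) < n := Nat.ofNat_lt_cast.2 hn
  have hn0 : 0 < n - 2 := by linarith
  have hn_pos : 0 < n := by linarith
  obtain ⟨p', hp'⟩ : ∃ p' : ℝ≥0, (p' : ℝ) = 2 * n / (n - 2) := ⟨⟨_, by positivity⟩, rfl⟩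
  have hp'0 : p' ≠ 0 := (NNReal.coe_pos.1 (hp' ▸ by positivity)).ne'
  have hp'inv : (p' : ℝ)⁻¹ = ((2 : ℝ≥0) : ℝ)⁻¹ - n⁻¹ := by
    rw [hp', NNReal.coe_ofNat]
    field_simp
  have hsob := eLpNorm_le_eLpNorm_fderiv_of_eq ν hu h2u one_le_two (by omega) hp'inv
  rw [eLpNorm_nnreal_eq_lintegral hp'0, eLpNorm_nnreal_eq_lintegral two_ne_zero] at hsob
  simp only [hp', NNReal.coe_ofNat] at hsob
  have h2 := pow_le_pow_left₀ (by positivity) hsob 2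
  rw [mul_pow, ← ENNReal.rpow_natCast, ← ENNReal.rpow_natCast (_ ^ _), ← ENNReal.rpow_mul,
    ← ENNReal.rpow_mul] at h2
  have hexp : 1 / (2 * n / (n - 2)) * ((2 : ℕ) : ℝ) = (n - 2) / n := by
    push_cast
    field_simp
  rwa [hexp, show (1 / 2 : ℝ) * ((2 : ℕ) : ℝ) = 1 by norm_num, ENNReal.rpow_one] at h2

theorem lintegral_enorm_rpow_le_gagliardoNirenberg {u : E → F} (hu : ContDiff ℝ 1 u)
    (h2u : HasCompactSupport u) (hn : 2 < finrank ℝ E) :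
    ∫⁻ x, ‖u x‖ₑ ^ (2 + 4 / (finrank ℝ E : ℝ)) ∂ν ≤
      (SNormLESNormFDerivOfEqConst F ν 2 : ℝ≥0∞) ^ 2 *
        (∫⁻ x, ‖u x‖ₑ ^ (2 : ℝ) ∂ν) ^ (2 / (finrank ℝ E : ℝ)) *
          ∫⁻ x, ‖fderiv ℝ u x‖ₑ ^ (2 : ℝ) ∂ν := by
  set n : ℝ := (finrank ℝ E : ℝ)
  calc _ ≤ (∫⁻ x, ‖u x‖ₑ ^ (2 : ℝ) ∂ν) ^ (2 / n) *
          (∫⁻ x, ‖u x‖ₑ ^ (2 * n / (n - 2)) ∂ν) ^ ((n - 2) / n) :=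
        lintegral_rpow_two_add_four_div_le ν hu.continuous.enorm.aemeasurable (Nat.ofNat_lt_cast.2 hn)
    _ ≤ (∫⁻ x, ‖u x‖ₑ ^ (2 : ℝ) ∂ν) ^ (2 / n) * ((SNormLESNormFDerivOfEqConst F ν 2 : ℝ≥0∞) ^ 2 *
          ∫⁻ x, ‖fderiv ℝ u x‖ₑ ^ (2 : ℝ) ∂ν) := by
        gcongr
        exact lintegral_sobolev_rpow_le ν hu h2u hn
    _ = _ := by ring

theorem integral_norm_rpow_le_gagliardoNirenberg {u : E → F} (hu : ContDiff ℝ 1 u)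
    (h2u : HasCompactSupport u) (hn : 2 < finrank ℝ E) :
    ∫ x, ‖u x‖ ^ (2 + 4 / (finrank ℝ E : ℝ)) ∂ν ≤
      (SNormLESNormFDerivOfEqConst F ν 2 : ℝ) ^ 2 *
        (∫ x, ‖u x‖ ^ 2 ∂ν) ^ (2 / (finrank ℝ E : ℝ)) * ∫ x, ‖fderiv ℝ u x‖ ^ 2 ∂ν := by
  have hDu := hu.continuous_fderiv one_ne_zero
  have hq : (0 : ℝ) < 2 + 4 / (finrank ℝ E : ℝ) := by positivity
  have hB : 0 ≤ ∫ x, ‖u x‖ ^ 2 ∂ν := integral_nonneg fun _ => by positivity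
  have hG : 0 ≤ ∫ x, ‖fderiv ℝ u x‖ ^ 2 ∂ν := integral_nonneg fun _ => by positivity
  rw [← ENNReal.ofReal_le_ofReal_iff (by positivity), ENNReal.ofReal_mul (by positivity),
    ENNReal.ofReal_mul (by positivity), ← ENNReal.ofReal_rpow_of_nonneg hB (by positivity),
    ENNReal.ofReal_pow NNReal.zero_le_coe, ENNReal.ofReal_coe_nnreal]
  simp_rw [← Real.rpow_two,
    ofReal_integral_norm_rpow_eq_lintegral ν hu.continuous h2u hq,
    ofReal_integral_norm_rpow_eq_lintegral ν hu.continuous h2u two_pos,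
    ofReal_integral_norm_rpow_eq_lintegral ν hDu (h2u.fderiv (𝕜 := ℝ)) two_pos]
  exact lintegral_enorm_rpow_le_gagliardoNirenberg ν hu h2u hn

end GagliardoNirenberg

section Annulus

variable {E : Type*} [NormedAddCommGroup E]

def annulus (a b : ℝ) : Set E := {x | a < ‖x‖ ∧ ‖x‖ < b}

theorem isOpen_annulus (a b : ℝ) : IsOpen (annulus a b : Set E) :=
  (isOpen_lt continuous_const continuous_norm).inter (isOpen_lt continuous_norm continuous_const)

theorem annulus_subset_closedBall (a b : ℝ) : (annulus a b : Set E) ⊆ Metric.closedBall 0 b :=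
  fun _ hx => mem_closedBall_zero_iff.2 hx.2.le

variable [ProperSpace E] [MeasurableSpace E] [OpensMeasurableSpace E] {ν : Measure E}
  [IsFiniteMeasureOnCompacts ν] {a b μ : ℝ}

theorem Continuous.integrableOn_annulus {g : E → ℝ} (hg : Continuous g) :
    IntegrableOn g (annulus a b) ν :=
  (hg.continuousOn.integrableOn_compact (isCompact_closedBall 0 b)).mono_set
    (annulus_subset_closedBall a b)

theorem rpow_mul_setIntegral_annulus_le (ha : 0 ≤ a) (hμ : 0 ≤ μ) {g : E → ℝ}
    (hg : Continuous g) (hg0 : ∀ x, 0 ≤ g x) :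
    a ^ μ * ∫ x in annulus a b, g x ∂ν ≤ ∫ x in annulus a b, ‖x‖ ^ μ * g x ∂ν := by
  rw [← integral_const_mul]
  refine setIntegral_mono_on (continuous_const.mul hg).integrableOn_annulus
    ((continuous_norm.rpow_const fun _ => Or.inr hμ).mul hg).integrableOn_annulus
    (isOpen_annulus a b).measurableSet fun x hx => ?_
  have := hg0 x
  gcongr
  exact hx.1.le

theorem setIntegral_annulus_norm_rpow_mul_le (hμ : 0 ≤ μ) {f g : E → ℝ} (hf : Continuous f)
    (hg : Continuous g) (hfg : ∀ x, f x ≤ g x) (hg0 : ∀ x, 0 ≤ g x) :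
    ∫ x in annulus a b, ‖x‖ ^ μ * f x ∂ν ≤ b ^ μ * ∫ x in annulus a b, g x ∂ν := by
  rw [← integral_const_mul]
  refine setIntegral_mono_on
    ((continuous_norm.rpow_const fun _ => Or.inr hμ).mul hf).integrableOn_annulus
    (continuous_const.mul hg).integrableOn_annulus
    (isOpen_annulus a b).measurableSet fun x hx => ?_
  have := hg0 x
  calc ‖x‖ ^ μ * f x ≤ ‖x‖ ^ μ * g x := by gcongr; exact hfg x
    _ ≤ b ^ μ * g x := by gcongr; exact hx.2.le

end Annulus

theorem bddBelow_image_and_tendsto_atTop_of_le {ι : Type*} {s : Set ι} {f g : ι → ℝ} {k K : ℝ}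
    (hk : 0 < k) (hg : ∀ v ∈ s, 0 ≤ g v) (hfg : ∀ v ∈ s, k * g v - K ≤ f v) :
    BddBelow (f '' s) ∧ ∀ v : ℕ → ι, (∀ n, v n ∈ s) →
      Tendsto (fun n => g (v n)) atTop atTop → Tendsto (fun n => f (v n)) atTop atTop := by
  refine ⟨⟨-K, ?_⟩, fun v hv hgv => ?_⟩
  · rintro _ ⟨v, hv, rfl⟩
    nlinarith [hg v hv, hfg v hv]
  · exact tendsto_atTop_mono (fun n => hfg _ (hv n))
      (tendsto_atTop_add_const_right _ _ (hgv.const_mul_atTop hk))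

section Energy

variable {M : ℕ} {D : Set (EuclideanSpace ℝ (Fin M))} {v : EuclideanSpace ℝ (Fin M) → ℝ}

theorem H10mem.setIntegral_comp_eq_integral (hv : H10mem D v) {f : ℝ → ℝ} (hf : f 0 = 0) :
    ∫ x in D, f (v x) = ∫ x, f (v x) :=
  setIntegral_eq_integral_of_forall_compl_eq_zero fun x hx => by
    rw [image_eq_zero_of_notMem_tsupport fun h => hx (hv.2.2 h), hf]

theorem H10mem.setIntegral_norm_gradient_sq (hv : H10mem D v) :
    ∫ x in D, ‖gradient v x‖ ^ 2 = ∫ x, ‖fderiv ℝ v x‖ ^ 2 := by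
  simp only [gradient, LinearIsometryEquiv.norm_map]
  refine setIntegral_eq_integral_of_forall_compl_eq_zero fun x hx => ?_
  rw [fderiv_of_notMem_tsupport ℝ fun h => hx (hv.2.2 h), norm_zero, zero_pow two_ne_zero]

theorem H10mem.setIntegral_abs_rpow_le_gagliardoNirenberg (hM : 3 ≤ M) (hv : H10mem D v) :
    ∫ x in D, |v x| ^ (2 + 4 / (M : ℝ)) ≤
      (SNormLESNormFDerivOfEqConst ℝ (volume : Measure (EuclideanSpace ℝ (Fin M))) 2 : ℝ) ^ 2 *
        (∫ x in D, v x ^ 2) ^ (2 / (M : ℝ)) * ∫ x in D, ‖gradient v x‖ ^ 2 := by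
  have hGN := integral_norm_rpow_le_gagliardoNirenberg volume hv.1 hv.2.1
    (by rwa [finrank_euclideanSpace_fin])
  simp only [finrank_euclideanSpace_fin, Real.norm_eq_abs, sq_abs] at hGN
  rwa [hv.setIntegral_norm_gradient_sq, hv.setIntegral_comp_eq_integral (f := fun s => s ^ 2)
    (zero_pow two_ne_zero), hv.setIntegral_comp_eq_integral (f := fun s => |s| ^ (2 + 4 / (M : ℝ)))
    (by rw [abs_zero, Real.zero_rpow (by positivity)])]

theorem le_energy_annulus {a b μ q θ A C S c : ℝ} {F : ℝ → ℝ}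
    (ha : 0 < a) (hb : 0 ≤ b) (hμ : 0 ≤ μ) (hq : 0 ≤ q) (hθ : 0 ≤ θ) (hFc : Continuous F)
    (hA : 0 ≤ A) (hC : 0 ≤ C) (hF : ∀ s, F s ≤ A * s ^ 2 + C * |s| ^ q) (hS : 0 ≤ S)
    (hv : H10mem (annulus a b) v)
    (hGN : ∫ x in annulus a b, |v x| ^ q ≤
      S * (∫ x in annulus a b, v x ^ 2) ^ θ * ∫ x in annulus a b, ‖gradient v x‖ ^ 2)
    (hmass : ∫ x in annulus a b, ‖x‖ ^ μ * v x ^ 2 = c ^ 2) :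
    (1 / 2 - b ^ μ * C * S * (c ^ 2 / a ^ μ) ^ θ) * (∫ x in annulus a b, ‖gradient v x‖ ^ 2) -
      b ^ μ * A * (c ^ 2 / a ^ μ) ≤ energy (annulus a b) μ F v := by
  set T := ∫ x in annulus a b, ‖gradient v x‖ ^ 2
  set X := ∫ x in annulus a b, v x ^ 2
  set Y := ∫ x in annulus a b, |v x| ^ q
  have hvc : Continuous v := hv.1.continuous
  have hT : 0 ≤ T := integral_nonneg fun _ => by positivity
  have hX0 : 0 ≤ X := integral_nonneg fun _ => by positivity
  have hX : X ≤ c ^ 2 / a ^ μ := by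
    rw [le_div_iff₀' (by positivity), ← hmass]
    exact rpow_mul_setIntegral_annulus_le ha.le hμ (hvc.pow 2) fun _ => sq_nonneg _
  have hY : Y ≤ S * (c ^ 2 / a ^ μ) ^ θ * T := hGN.trans (by gcongr)
  have hg₁ : Continuous fun x => A * v x ^ 2 := by fun_prop
  have hg₂ : Continuous fun x => C * |v x| ^ q :=
    continuous_const.mul (hvc.abs.rpow_const fun _ => Or.inr hq)
  have hpot : ∫ x in annulus a b, ‖x‖ ^ μ * F (v x) ≤ b ^ μ * (A * X + C * Y) :=
    calc ∫ x in annulus a b, ‖x‖ ^ μ * F (v x)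
        ≤ b ^ μ * ∫ x in annulus a b, A * v x ^ 2 + C * |v x| ^ q :=
          setIntegral_annulus_norm_rpow_mul_le hμ (hFc.comp hvc) (hg₁.add hg₂)
            (fun x => hF (v x)) fun x => by positivity
      _ = b ^ μ * (A * X + C * Y) := by
          rw [integral_add hg₁.integrableOn_annulus hg₂.integrableOn_annulus, integral_const_mul,
            integral_const_mul]
  have hpot' : b ^ μ * (A * X + C * Y) ≤
      b ^ μ * (A * (c ^ 2 / a ^ μ) + C * (S * (c ^ 2 / a ^ μ) ^ θ * T)) := by
    gcongr
  have henergy : energy (annulus a b) μ F v = 1 / 2 * T - ∫ x in annulus a b, ‖x‖ ^ μ * F (v x) :=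
    rfl
  rw [henergy]
  linarith

end Energy

/-- in the mass-critical case `q = 2 + 4/M`, there exists `c₁ > 0` such that for
every `0 < c < c₁` the functional `E` is coercive and bounded below on
`S_c = {v ∈ H¹₀(D) : ∫_D |x|^μ v² = c²}`. -/
theorem stmt_3 {M : ℕ} (hM : 3 ≤ M) (a b : ℝ) (ha : 0 < a) (hab : a < b)
    (D : Set (EuclideanSpace ℝ (Fin M))) (hD : D = {x | a < ‖x‖ ∧ ‖x‖ < b})
    (μ : ℝ) (hμ : 0 ≤ μ) (q : ℝ) (hq : q = 2 + 4 / (M : ℝ))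
    (F : ℝ → ℝ) (hFc : Continuous F)
    (hF : ∀ ε : ℝ, 0 < ε → ∃ Cε : ℝ, 0 < Cε ∧ ∀ s : ℝ, F s ≤ ε / 2 * s ^ 2 + Cε / q * |s| ^ q) :
    ∃ c₁ : ℝ, 0 < c₁ ∧ ∀ c : ℝ, 0 < c → c < c₁ →
      BddBelow (energy D μ F ''
          {v | H10mem D v ∧ (∫ x in D, ‖x‖ ^ μ * (v x) ^ 2) = c ^ 2}) ∧
      ∀ v : ℕ → EuclideanSpace ℝ (Fin M) → ℝ,
        (∀ n, H10mem D (v n) ∧ (∫ x in D, ‖x‖ ^ μ * (v n x) ^ 2) = c ^ 2) →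
        Tendsto (fun n => ∫ x in D, ‖gradient (v n) x‖ ^ 2) atTop atTop →
        Tendsto (fun n => energy D μ F (v n)) atTop atTop := by
  obtain rfl : D = annulus a b := hD
  subst hq
  obtain ⟨C, hC, hFC⟩ := hF 1 one_pos
  set S := (SNormLESNormFDerivOfEqConst ℝ (volume : Measure (EuclideanSpace ℝ (Fin M))) 2 : ℝ) ^ 2
  let δ : ℝ → ℝ := fun c => b ^ μ * (C / (2 + 4 / M)) * S * (c ^ 2 / a ^ μ) ^ (2 / (M : ℝ))
  have hδ : Tendsto δ (𝓝 0) (𝓝 0) := by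
    have : Continuous δ := by fun_prop (disch := positivity)
    simpa [δ, Real.zero_rpow (by positivity : 2 / (M : ℝ) ≠ 0)] using this.tendsto 0
  obtain ⟨c₁, hc₁, hδc₁⟩ := Metric.eventually_nhds_iff.1
    (hδ.eventually (gt_mem_nhds (show (0 : ℝ) < 1 / 4 by norm_num)))
  refine ⟨c₁, hc₁, fun c hc hcc => ?_⟩
  have hδc : δ c < 1 / 4 := hδc₁ (by rwa [Real.dist_0_eq_abs, abs_of_pos hc])
  refine bddBelow_image_and_tendsto_atTop_of_le
    (g := fun v => ∫ x in annulus a b, ‖gradient v x‖ ^ 2) (k := 1 / 4)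
    (K := b ^ μ * (1 / 2) * (c ^ 2 / a ^ μ)) (by norm_num)
    (fun v _ => integral_nonneg fun _ => by positivity) fun v hv => ?_
  obtain ⟨hv, hmass⟩ := hv
  have hT : 0 ≤ ∫ x in annulus a b, ‖gradient v x‖ ^ 2 := integral_nonneg fun _ => by positivity
  have h := le_energy_annulus ha (ha.trans hab).le hμ (by positivity) (by positivity) hFc
    (by norm_num) (by positivity) hFC (by positivity) hv
    (hv.setIntegral_abs_rpow_le_gagliardoNirenberg hM) hmass
  nlinarith
end
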